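/- The period semiring is a commutative semiring: 0_T and 1_T are coalesced, the operations +_T and ·_T map pairs of coalesced temporal K-elements to coalesced temporal K-elements, +_T and ·_T are commutative and associative on coalesced elements, 0_T is a neutral element for +_T, 1_T is a neutral element for ·_T, ·_T distributes over +_T, and k ·_T 0_T = 0_T for every coalesced k. -/

import Mathlib

open scoped Classical

namespace TemporalK

variable {K : Type*}

/-- An interval over the time domain `{0, ..., N-1}`: a pair `(b, e)` with `b < e ≤ N`. -/
abbrev TInterval (N : ℕ) := {I : Fin (N + 1) × Fin (N + 1) // I.1 < I.2}

/-- A temporal `K`-element: a function assigning to each interval an element of `K`. -/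
abbrev TempEl (N : ℕ) (K : Type*) := TInterval N → K

/-- The interval `I = (b, e)` contains the time point `T` iff `b ≤ T < e`. -/
def Contains {N : ℕ} (I : TInterval N) (T : ℕ) : Prop :=
  (I.val.1 : ℕ) ≤ T ∧ T < (I.val.2 : ℕ)

/-- The timeslice of `𝒯` at time point `T`: the sum of `𝒯 I` over all intervals `I`
containing `T`. -/
noncomputable def slice {N : ℕ} [CommSemiring K] (𝒯 : TempEl N K) (T : ℕ) : K :=
  ∑ I ∈ Finset.univ.filter (fun I : TInterval N => Contains I T), 𝒯 I

/-- `T` is an (annotation) changepoint of `𝒯` iff `T = 0` or the timeslices at `T - 1`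
and `T` differ. -/
def Changepoint {N : ℕ} [CommSemiring K] (𝒯 : TempEl N K) (T : ℕ) : Prop :=
  T = 0 ∨ slice 𝒯 (T - 1) ≠ slice 𝒯 T

/-- `I = (b, e)` is a changepoint interval of `𝒯` iff `b` is a changepoint, `e` is a
changepoint or equals `N`, and no time point strictly between `b` and `e` is a changepoint. -/
def CPInterval {N : ℕ} [CommSemiring K] (𝒯 : TempEl N K) (I : TInterval N) : Prop :=
  Changepoint 𝒯 (I.val.1 : ℕ) ∧
    (Changepoint 𝒯 (I.val.2 : ℕ) ∨ (I.val.2 : ℕ) = N) ∧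
    ∀ T : ℕ, (I.val.1 : ℕ) < T → T < (I.val.2 : ℕ) → ¬ Changepoint 𝒯 T

/-- `K`-coalescing: maps changepoint intervals `(b, e)` to the timeslice at `b` and all
other intervals to `0`. -/
noncomputable def coal {N : ℕ} [CommSemiring K] (𝒯 : TempEl N K) : TempEl N K :=
  fun I => if CPInterval 𝒯 I then slice 𝒯 (I.val.1 : ℕ) else 0

/-- Snapshot equivalence: equal timeslices at every time point. -/
def SnapEq {N : ℕ} [CommSemiring K] (k k' : TempEl N K) : Prop :=
  ∀ T : ℕ, T < N → slice k T = slice k' T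

/-- A temporal `K`-element is coalesced iff it is the `K`-coalescing of some
temporal `K`-element. -/
def Coalesced {N : ℕ} [CommSemiring K] (k : TempEl N K) : Prop :=
  ∃ 𝒯 : TempEl N K, k = coal 𝒯

/-- Pointwise addition of temporal `K`-elements. -/
def padd {N : ℕ} [CommSemiring K] (k k' : TempEl N K) : TempEl N K :=
  fun I => k I + k' I

/-- Pointwise multiplication of temporal `K`-elements:
`(k ·_P k')(I) = Σ k(I')·k'(I'')` over all pairs `(I', I'')` whose intersection is
nonempty and equals `I`. -/
noncomputable def pmul {N : ℕ} [CommSemiring K] (k k' : TempEl N K) : TempEl N K :=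
  fun I =>
    ∑ p ∈ Finset.univ.filter (fun p : TInterval N × TInterval N =>
        max (p.1.val.1 : ℕ) (p.2.val.1 : ℕ) < min (p.1.val.2 : ℕ) (p.2.val.2 : ℕ) ∧
        (I.val.1 : ℕ) = max (p.1.val.1 : ℕ) (p.2.val.1 : ℕ) ∧
        (I.val.2 : ℕ) = min (p.1.val.2 : ℕ) (p.2.val.2 : ℕ)),
      k p.1 * k' p.2

/-- Addition of the period semiring: coalesced pointwise addition. -/
noncomputable def tadd {N : ℕ} [CommSemiring K] (k k' : TempEl N K) : TempEl N K :=
  coal (padd k k')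

/-- Multiplication of the period semiring: coalesced pointwise multiplication. -/
noncomputable def tmul {N : ℕ} [CommSemiring K] (k k' : TempEl N K) : TempEl N K :=
  coal (pmul k k')

/-- The zero of the period semiring: maps every interval to `0`. -/
def zeroT (N : ℕ) (K : Type*) [CommSemiring K] : TempEl N K := fun _ => 0

/-- The one of the period semiring: maps the interval `(0, N)` to `1` and every other
interval to `0`. -/
def oneT (N : ℕ) (K : Type*) [CommSemiring K] : TempEl N K :=
  fun I => if (I.val.1 : ℕ) = 0 ∧ (I.val.2 : ℕ) = N then 1 else 0

/-- Encoding of an annotation history `f : time points → K` as a coalesced temporal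
`K`-element: coalesce the element assigning `f T` to each singleton interval `(T, T+1)`. -/
noncomputable def enc {N : ℕ} [CommSemiring K] (f : Fin N → K) : TempEl N K :=
  coal (fun I =>
    if h : (I.val.2 : ℕ) = (I.val.1 : ℕ) + 1 then
      f ⟨(I.val.1 : ℕ), by have := I.val.2.isLt; omega⟩
    else 0)

/-- The natural preorder of the semiring `K`. -/
def nle [CommSemiring K] (a b : K) : Prop := ∃ c, a + c = b

/-- The natural preorder of the period semiring (on coalesced temporal `K`-elements). -/
def tle {N : ℕ} [CommSemiring K] (k k' : TempEl N K) : Prop :=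
  ∃ k'' : TempEl N K, Coalesced k'' ∧ tadd k k'' = k'

/-- The pointwise monus: assigns `τ_T(k) −_K τ_T(k')` to each singleton interval
`(T, T+1)` and `0` to every non-singleton interval. -/
noncomputable def pmonus {N : ℕ} [CommSemiring K] (monus : K → K → K)
    (k k' : TempEl N K) : TempEl N K :=
  fun I =>
    if (I.val.2 : ℕ) = (I.val.1 : ℕ) + 1 then
      monus (slice k (I.val.1 : ℕ)) (slice k' (I.val.1 : ℕ))
    else 0

/-- The monus of the period semiring: coalesced pointwise monus. -/
noncomputable def tmonus {N : ℕ} [CommSemiring K] (monus : K → K → K)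
    (k k' : TempEl N K) : TempEl N K :=
  coal (pmonus monus k k')

end TemporalK

open TemporalK

/-!
A coalesced element is determined by its timeslices: `coal 𝒯` has the same timeslices as `𝒯`
(each time point lies in exactly one changepoint interval, on which the timeslice of `𝒯` is
constant), and `coal 𝒯` depends on `𝒯` only through its timeslices. Every timeslice `τ_T` is
additive and multiplicative — two intervals containing `T` meet in exactly one interval, which
again contains `T` — so each semiring law of the period semiring is the same law of `K`, read
off time point by time point.
-/

namespace TemporalK

variable {N : ℕ} {K : Type*} [CommSemiring K]

lemma slice_eq_zero_of_le (𝒯 : TempEl N K) {T : ℕ} (hT : N ≤ T) : slice 𝒯 T = 0 :=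
  Finset.sum_eq_zero fun I hI => by
    have hIT := (Finset.mem_filter.1 hI).2.2
    have := I.val.2.isLt
    omega

lemma coal_congr {𝒯 𝒯' : TempEl N K} (h : ∀ T < N, slice 𝒯 T = slice 𝒯' T) :
    coal 𝒯 = coal 𝒯' := by
  have hs (T : ℕ) : slice 𝒯 T = slice 𝒯' T := by
    rcases lt_or_ge T N with hT | hT
    · exact h T hT
    · rw [slice_eq_zero_of_le _ hT, slice_eq_zero_of_le _ hT]
  have hcp (I : TInterval N) : CPInterval 𝒯 I ↔ CPInterval 𝒯' I := by
    simp only [CPInterval, Changepoint, hs]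
  funext I
  simp only [coal, hcp, hs]

lemma slice_eq_of_not_changepoint {𝒯 : TempEl N K} {b T : ℕ} (hbT : b ≤ T)
    (h : ∀ t, b < t → t ≤ T → ¬ Changepoint 𝒯 t) : slice 𝒯 T = slice 𝒯 b := by
  induction T, hbT using Nat.le_induction with
  | base => rfl
  | succ T hbT ih =>
    have hT := h (T + 1) (by omega) le_rfl
    simp only [Changepoint, Nat.add_sub_cancel, not_or, not_not] at hT
    rw [← hT.2, ih fun t h1 h2 => h t h1 (by omega)]

lemma exists_cpInterval_contains (𝒯 : TempEl N K) {T : ℕ} (hT : T < N) :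
    ∃ I, CPInterval 𝒯 I ∧ Contains I T := by
  have hE : ∃ e, T < e ∧ (Changepoint 𝒯 e ∨ e = N) := ⟨N, hT, Or.inr rfl⟩
  set b := Nat.findGreatest (Changepoint 𝒯) T
  set e := Nat.find hE
  have hbT : b ≤ T := Nat.findGreatest_le T
  obtain ⟨hTe, he⟩ := Nat.find_spec hE
  have heN : e ≤ N := Nat.find_min' hE ⟨hT, Or.inr rfl⟩
  refine ⟨⟨(⟨b, by omega⟩, ⟨e, by omega⟩), Fin.mk_lt_mk.2 (by omega)⟩,
    ⟨Nat.findGreatest_spec (Nat.zero_le T) (Or.inl rfl), he, ?_⟩, hbT, hTe⟩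
  intro t hbt hte hc
  rcases le_or_gt t T with htT | hTt
  · exact Nat.findGreatest_is_greatest hbt htT hc
  · exact Nat.find_min hE hte ⟨hTt, Or.inl hc⟩

lemma CPInterval.le_of_contains {𝒯 : TempEl N K} {I J : TInterval N} {T : ℕ}
    (hI : CPInterval 𝒯 I) (hJ : CPInterval 𝒯 J) (hIT : Contains I T) (hJT : Contains J T) :
    (I.val.1 : ℕ) ≤ J.val.1 ∧ (I.val.2 : ℕ) ≤ J.val.2 := by
  obtain ⟨hIb, -, hImid⟩ := hI
  obtain ⟨-, hJe, hJmid⟩ := hJ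
  have := I.val.2.isLt
  constructor
  · by_contra! hJI
    exact hJmid _ hJI (by grind [Contains]) hIb
  · by_contra! hJI
    rcases hJe with hJe | hJe
    · exact hImid _ (by grind [Contains]) hJI hJe
    · omega

lemma CPInterval.eq_of_contains {𝒯 : TempEl N K} {I J : TInterval N} {T : ℕ}
    (hI : CPInterval 𝒯 I) (hJ : CPInterval 𝒯 J) (hIT : Contains I T) (hJT : Contains J T) :
    I = J := by
  obtain ⟨hb, he⟩ := hI.le_of_contains hJ hIT hJT
  obtain ⟨hb', he'⟩ := hJ.le_of_contains hI hJT hIT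
  exact Subtype.ext (Prod.ext (Fin.ext (by omega)) (Fin.ext (by omega)))

lemma slice_coal (𝒯 : TempEl N K) {T : ℕ} (hT : T < N) : slice (coal 𝒯) T = slice 𝒯 T := by
  obtain ⟨I, hI, hIT⟩ := exists_cpInterval_contains 𝒯 hT
  calc slice (coal 𝒯) T = coal 𝒯 I :=
        Finset.sum_eq_single_of_mem I (Finset.mem_filter.2 ⟨Finset.mem_univ _, hIT⟩)
          fun J hJ hJI => if_neg fun hJcp =>
            hJI (hJcp.eq_of_contains hI (Finset.mem_filter.1 hJ).2 hIT)
    _ = slice 𝒯 I.val.1 := if_pos hI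
    _ = slice 𝒯 T :=
        (slice_eq_of_not_changepoint hIT.1 fun t h1 h2 => hI.2.2 t h1 (by grind [Contains])).symm

lemma Coalesced.eq_of_slice_eq {k k' : TempEl N K} (hk : Coalesced k) (hk' : Coalesced k')
    (h : ∀ T < N, slice k T = slice k' T) : k = k' := by
  obtain ⟨𝒯, rfl⟩ := hk
  obtain ⟨𝒯', rfl⟩ := hk'
  exact coal_congr fun T hT => by simpa only [slice_coal _ hT] using h T hT

lemma coal_of_slice_eq_const {𝒯 : TempEl N K} {c : K} (h : ∀ T < N, slice 𝒯 T = c) :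
    coal 𝒯 = fun I => if (I.val.1 : ℕ) = 0 ∧ (I.val.2 : ℕ) = N then c else 0 := by
  have hnot (t : ℕ) (h0 : 0 < t) (htN : t < N) : ¬ Changepoint 𝒯 t :=
    fun hc => hc.elim (by omega) fun hne => hne (by rw [h _ (by omega), h _ htN])
  funext I
  have hbe : (I.val.1 : ℕ) < I.val.2 := I.property
  have := I.val.2.isLt
  have hcp : CPInterval 𝒯 I ↔ (I.val.1 : ℕ) = 0 ∧ (I.val.2 : ℕ) = N := by
    constructor
    · rintro ⟨hb, he, -⟩
      refine ⟨by_contra fun hb0 => hnot _ (by omega) (by omega) hb, ?_⟩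
      exact he.elim (fun he => by_contra fun heN => hnot _ (by omega) (by omega) he) id
    · rintro ⟨hb, he⟩
      exact ⟨Or.inl hb, Or.inr he, fun t h1 h2 => hnot t (by omega) (by omega)⟩
  simp only [coal, hcp]
  split_ifs with hI
  · rw [hI.1]
    exact h 0 (by omega)
  · rfl

lemma slice_zeroT (T : ℕ) : slice (zeroT N K) T = 0 :=
  Finset.sum_const_zero

lemma slice_oneT {T : ℕ} (hT : T < N) : slice (oneT N K) T = 1 := by
  let I₀ : TInterval N := ⟨(⟨0, by omega⟩, Fin.last N), Fin.mk_lt_mk.2 (by omega)⟩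
  rw [slice, Finset.sum_eq_single_of_mem I₀]
  · exact if_pos ⟨rfl, rfl⟩
  · exact Finset.mem_filter.2 ⟨Finset.mem_univ _, Nat.zero_le T, hT⟩
  · intro J _ hJ
    refine if_neg fun ⟨h1, h2⟩ => hJ (Subtype.ext (Prod.ext (Fin.ext h1) (Fin.ext h2)))

lemma coalesced_zeroT : Coalesced (zeroT N K) :=
  ⟨zeroT N K, by
    rw [coal_of_slice_eq_const fun T _ => slice_zeroT T]
    exact funext fun _ => (ite_self 0).symm⟩

lemma coalesced_oneT : Coalesced (oneT N K) :=
  ⟨oneT N K, (coal_of_slice_eq_const fun _ => slice_oneT).symm⟩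

/-- The intersection of two intervals; junk value `I` when they are disjoint. -/
def inter (I J : TInterval N) : TInterval N :=
  if h : max (I.val.1 : ℕ) (J.val.1 : ℕ) < min (I.val.2 : ℕ) (J.val.2 : ℕ) then
    ⟨(⟨max (I.val.1 : ℕ) (J.val.1 : ℕ), by omega⟩, ⟨min (I.val.2 : ℕ) (J.val.2 : ℕ), by omega⟩),
      Fin.mk_lt_mk.2 h⟩
  else I

lemma eq_inter_iff {I J L : TInterval N}
    (h : max (I.val.1 : ℕ) (J.val.1 : ℕ) < min (I.val.2 : ℕ) (J.val.2 : ℕ)) :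
    L = inter I J ↔
      (L.val.1 : ℕ) = max (I.val.1 : ℕ) (J.val.1 : ℕ) ∧
        (L.val.2 : ℕ) = min (I.val.2 : ℕ) (J.val.2 : ℕ) := by
  rw [inter, dif_pos h, Subtype.ext_iff, Prod.ext_iff, Fin.ext_iff, Fin.ext_iff]

lemma contains_and_eq_inter_iff {I J L : TInterval N} {T : ℕ} :
    (Contains L T ∧ max (I.val.1 : ℕ) (J.val.1 : ℕ) < min (I.val.2 : ℕ) (J.val.2 : ℕ) ∧
        (L.val.1 : ℕ) = max (I.val.1 : ℕ) (J.val.1 : ℕ) ∧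
        (L.val.2 : ℕ) = min (I.val.2 : ℕ) (J.val.2 : ℕ)) ↔
      (L = inter I J ∧ Contains I T ∧ Contains J T) := by
  constructor
  · rintro ⟨hLT, h, hL⟩
    exact ⟨(eq_inter_iff h).2 hL, by grind [Contains], by grind [Contains]⟩
  · rintro ⟨hL, hIT, hJT⟩
    have h : max (I.val.1 : ℕ) (J.val.1 : ℕ) < min (I.val.2 : ℕ) (J.val.2 : ℕ) := by
      grind [Contains]
    have hL := (eq_inter_iff h).1 hL
    exact ⟨by grind [Contains], h, hL⟩

lemma slice_padd (k k' : TempEl N K) (T : ℕ) :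
    slice (padd k k') T = slice k T + slice k' T :=
  Finset.sum_add_distrib

lemma slice_pmul (k k' : TempEl N K) (T : ℕ) :
    slice (pmul k k') T = slice k T * slice k' T := by
  simp only [slice, pmul, Finset.sum_mul_sum, ← Finset.sum_product']
  rw [Finset.sum_comm' (s' := fun p => {inter p.1 p.2})
    (t' := Finset.univ.filter (Contains · T) ×ˢ Finset.univ.filter (Contains · T))]
  · simp only [Finset.sum_singleton]
  · intro L p
    simp only [Finset.mem_filter, Finset.mem_univ, true_and, Finset.mem_product,
      Finset.mem_singleton]
    exact contains_and_eq_inter_iff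

lemma slice_tadd (k k' : TempEl N K) {T : ℕ} (hT : T < N) :
    slice (tadd k k') T = slice k T + slice k' T := by
  rw [tadd, slice_coal _ hT, slice_padd]

lemma slice_tmul (k k' : TempEl N K) {T : ℕ} (hT : T < N) :
    slice (tmul k k') T = slice k T * slice k' T := by
  rw [tmul, slice_coal _ hT, slice_pmul]

lemma coalesced_tadd (k k' : TempEl N K) : Coalesced (tadd k k') := ⟨_, rfl⟩

lemma coalesced_tmul (k k' : TempEl N K) : Coalesced (tmul k k') := ⟨_, rfl⟩

end TemporalK

theorem period_semiring_is_comm_semiring_general {N : ℕ}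
    {K : Type*} [CommSemiring K] :
    Coalesced (zeroT N K) ∧
    Coalesced (oneT N K) ∧
    (∀ k k' : TempEl N K, Coalesced k → Coalesced k' →
        Coalesced (tadd k k') ∧ Coalesced (tmul k k')) ∧
    (∀ k k' : TempEl N K, Coalesced k → Coalesced k' → tadd k k' = tadd k' k) ∧
    (∀ k k' k'' : TempEl N K, Coalesced k → Coalesced k' → Coalesced k'' →
        tadd (tadd k k') k'' = tadd k (tadd k' k'')) ∧
    (∀ k k' : TempEl N K, Coalesced k → Coalesced k' → tmul k k' = tmul k' k) ∧
    (∀ k k' k'' : TempEl N K, Coalesced k → Coalesced k' → Coalesced k'' →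
        tmul (tmul k k') k'' = tmul k (tmul k' k'')) ∧
    (∀ k : TempEl N K, Coalesced k → tadd k (zeroT N K) = k) ∧
    (∀ k : TempEl N K, Coalesced k → tmul k (oneT N K) = k) ∧
    (∀ k k' k'' : TempEl N K, Coalesced k → Coalesced k' → Coalesced k'' →
        tmul k (tadd k' k'') = tadd (tmul k k') (tmul k k'')) ∧
    (∀ k : TempEl N K, Coalesced k → tmul k (zeroT N K) = zeroT N K) := by
  refine ⟨coalesced_zeroT, coalesced_oneT,
    fun k k' _ _ => ⟨coalesced_tadd k k', coalesced_tmul k k'⟩, ?_, ?_, ?_, ?_, ?_, ?_, ?_, ?_⟩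
  · exact fun k k' _ _ => (coalesced_tadd k k').eq_of_slice_eq (coalesced_tadd k' k)
      fun T hT => by rw [slice_tadd _ _ hT, slice_tadd _ _ hT, add_comm]
  · exact fun k k' k'' _ _ _ => (coalesced_tadd _ _).eq_of_slice_eq (coalesced_tadd _ _)
      fun T hT => by simp only [slice_tadd _ _ hT, add_assoc]
  · exact fun k k' _ _ => (coalesced_tmul k k').eq_of_slice_eq (coalesced_tmul k' k)
      fun T hT => by rw [slice_tmul _ _ hT, slice_tmul _ _ hT, mul_comm]
  · exact fun k k' k'' _ _ _ => (coalesced_tmul _ _).eq_of_slice_eq (coalesced_tmul _ _)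
      fun T hT => by simp only [slice_tmul _ _ hT, mul_assoc]
  · exact fun k hk => (coalesced_tadd _ _).eq_of_slice_eq hk
      fun T hT => by rw [slice_tadd _ _ hT, slice_zeroT, add_zero]
  · exact fun k hk => (coalesced_tmul _ _).eq_of_slice_eq hk
      fun T hT => by rw [slice_tmul _ _ hT, slice_oneT hT, mul_one]
  · exact fun k k' k'' _ _ _ => (coalesced_tmul _ _).eq_of_slice_eq (coalesced_tadd _ _)
      fun T hT => by simp only [slice_tmul _ _ hT, slice_tadd _ _ hT, mul_add]
  · exact fun k _ => (coalesced_tmul _ _).eq_of_slice_eq coalesced_zeroT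
      fun T hT => by rw [slice_tmul _ _ hT, slice_zeroT, mul_zero]

theorem period_semiring_is_comm_semiring {N : ℕ} (hN : 1 ≤ N)
    {K : Type*} [CommSemiring K] :
    Coalesced (zeroT N K) ∧
    Coalesced (oneT N K) ∧
    (∀ k k' : TempEl N K, Coalesced k → Coalesced k' →
        Coalesced (tadd k k') ∧ Coalesced (tmul k k')) ∧
    (∀ k k' : TempEl N K, Coalesced k → Coalesced k' → tadd k k' = tadd k' k) ∧
    (∀ k k' k'' : TempEl N K, Coalesced k → Coalesced k' → Coalesced k'' →
        tadd (tadd k k') k'' = tadd k (tadd k' k'')) ∧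
    (∀ k k' : TempEl N K, Coalesced k → Coalesced k' → tmul k k' = tmul k' k) ∧
    (∀ k k' k'' : TempEl N K, Coalesced k → Coalesced k' → Coalesced k'' →
        tmul (tmul k k') k'' = tmul k (tmul k' k'')) ∧
    (∀ k : TempEl N K, Coalesced k → tadd k (zeroT N K) = k) ∧
    (∀ k : TempEl N K, Coalesced k → tmul k (oneT N K) = k) ∧
    (∀ k k' k'' : TempEl N K, Coalesced k → Coalesced k' → Coalesced k'' →
        tmul k (tadd k' k'') = tadd (tmul k k') (tmul k k'')) ∧
    (∀ k : TempEl N K, Coalesced k → tmul k (zeroT N K) = zeroT N K) :=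
  period_semiring_is_comm_semiring_general
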